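/- Let A be a unital associative algebra over a commutative ring k and let N₁, N₂ be A-sub-bimodules of A² = ker m. If the first-order differential calculi (A²/N₁, π₁ ∘ D) and (A²/N₂, π₂ ∘ D) are isomorphic (i.e. there is an A-bimodule isomorphism iso : A²/N₁ → A²/N₂ with iso ∘ π₁ ∘ D = π₂ ∘ D), then N₁ = N₂. -/

import Mathlib

/- Isomorphic quotient calculi have equal defining sub-bimodules: if
(A²/N₁, π₁ ∘ D) ≅ (A²/N₂, π₂ ∘ D) as first-order differential calculi,
then N₁ = N₂. -/

open TensorProduct

/-- The multiplication map `m : A ⊗[k] A → A`. -/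
noncomputable def mulMap (k A : Type*) [CommRing k] [Ring A] [Algebra k A] :
    A ⊗[k] A →ₗ[k] A := LinearMap.mul' k A

/-- The universal differential `D b = 1 ⊗ b − b ⊗ 1`. -/
noncomputable def Duniv (k A : Type*) [CommRing k] [Ring A] [Algebra k A] (b : A) :
    A ⊗[k] A := (1 : A) ⊗ₜ[k] b - b ⊗ₜ[k] (1 : A)

section Lemmas
variable (k A : Type*) [CommRing k] [Ring A] [Algebra k A]

lemma mulMap_leftMul (c : A) (x : A ⊗[k] A) :
    mulMap k A ((c ⊗ₜ[k] (1 : A)) * x) = c * mulMap k A x := by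
  induction x using TensorProduct.induction_on with
  | zero => simp
  | tmul a b =>
      simp [mulMap, Algebra.TensorProduct.tmul_mul_tmul, LinearMap.mul'_apply, mul_assoc]
  | add x y hx hy => simp [mul_add, hx, hy]

lemma mulMap_rightMul (c : A) (x : A ⊗[k] A) :
    mulMap k A (x * ((1 : A) ⊗ₜ[k] c)) = mulMap k A x * c := by
  induction x using TensorProduct.induction_on with
  | zero => simp
  | tmul a b =>
      simp [mulMap, Algebra.TensorProduct.tmul_mul_tmul, LinearMap.mul'_apply, mul_assoc]
  | add x y hx hy => simp [add_mul, hx, hy]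

lemma Duniv_mem (b : A) : Duniv k A b ∈ LinearMap.ker (mulMap k A) := by
  simp [Duniv, mulMap, LinearMap.mem_ker, map_sub, LinearMap.mul'_apply]

/-- The left `A`-action `c·x = (c ⊗ 1) * x` on `A² = ker m`. -/
noncomputable def actL (c : A) (x : LinearMap.ker (mulMap k A)) :
    LinearMap.ker (mulMap k A) :=
  ⟨(c ⊗ₜ[k] (1 : A)) * (x : A ⊗[k] A), by
    have hx := x.2
    rw [LinearMap.mem_ker] at hx ⊢
    rw [mulMap_leftMul, hx, mul_zero]⟩

/-- The right `A`-action `x·c = x * (1 ⊗ c)` on `A² = ker m`. -/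
noncomputable def actR (c : A) (x : LinearMap.ker (mulMap k A)) :
    LinearMap.ker (mulMap k A) :=
  ⟨(x : A ⊗[k] A) * ((1 : A) ⊗ₜ[k] c), by
    have hx := x.2
    rw [LinearMap.mem_ker] at hx ⊢
    rw [mulMap_rightMul, hx, zero_mul]⟩

end Lemmas

/-!
The map `z ↦ z - m(z) ⊗ 1` is a surjection `A ⊗ A → A²` sending `a ⊗ b` to `a · D b`.
Left-linearity of `iso` and `iso ∘ π₁ ∘ D = π₂ ∘ D` make `iso ∘ π₁` and `π₂` agree on these
elements, hence on all of `A²`; so `π₁` and `π₂` have the same kernel, and `N₁ = N₂`.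
-/

theorem Submodule.eq_of_linearEquiv_comp_mkQ {R M : Type*} [Ring R] [AddCommGroup M]
    [Module R M] {p q : Submodule R M} (e : (M ⧸ p) ≃ₗ[R] (M ⧸ q))
    (he : e.toLinearMap ∘ₗ p.mkQ = q.mkQ) : p = q := by
  rw [← p.ker_mkQ, ← q.ker_mkQ, ← he, LinearEquiv.ker_comp]

theorem Submodule.eq_of_comap_subtype_eq {R M : Type*} [Ring R] [AddCommGroup M] [Module R M]
    {K p q : Submodule R M} (hp : p ≤ K) (hq : q ≤ K)
    (h : p.comap K.subtype = q.comap K.subtype) : p = q := by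
  rw [← inf_of_le_right hp, ← inf_of_le_right hq, ← Submodule.map_comap_subtype,
    ← Submodule.map_comap_subtype, h]

section ProjKer
variable (k A : Type*) [CommRing k] [Ring A] [Algebra k A]

noncomputable def projKer : A ⊗[k] A →ₗ[k] LinearMap.ker (mulMap k A) :=
  (LinearMap.id - (TensorProduct.mk k A A).flip 1 ∘ₗ mulMap k A).codRestrict _ fun z => by
    simp [LinearMap.mem_ker, mulMap, LinearMap.mul'_apply]

theorem coe_projKer (z : A ⊗[k] A) :
    (projKer k A z : A ⊗[k] A) = z - mulMap k A z ⊗ₜ[k] (1 : A) :=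
  rfl

theorem projKer_surjective : Function.Surjective (projKer k A) := fun x =>
  ⟨x, Subtype.ext <| by rw [coe_projKer, LinearMap.mem_ker.mp x.2, zero_tmul, sub_zero]⟩

theorem projKer_tmul (a b : A) :
    projKer k A (a ⊗ₜ[k] b) = actL k A a ⟨Duniv k A b, Duniv_mem k A b⟩ :=
  Subtype.ext <| by
    rw [coe_projKer]
    simp [actL, Duniv, mulMap, LinearMap.mul'_apply, mul_sub, Algebra.TensorProduct.tmul_mul_tmul]

end ProjKer

theorem iso_fodc_eq_subbimodule (k A : Type*) [CommRing k] [Ring A] [Algebra k A]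
    (N₁ N₂ : Submodule k (A ⊗[k] A))
    (hN₁ker : N₁ ≤ LinearMap.ker (mulMap k A))
    (hN₂ker : N₂ ≤ LinearMap.ker (mulMap k A))
    (iso : ((LinearMap.ker (mulMap k A)) ⧸
        (N₁.comap (LinearMap.ker (mulMap k A)).subtype)) ≃ₗ[k]
      ((LinearMap.ker (mulMap k A)) ⧸
        (N₂.comap (LinearMap.ker (mulMap k A)).subtype)))
    (hisoD : ∀ a : A,
      iso (Submodule.Quotient.mk ⟨Duniv k A a, Duniv_mem k A a⟩) =
        Submodule.Quotient.mk ⟨Duniv k A a, Duniv_mem k A a⟩)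
    (hisoL : ∀ (c : A) (x y : LinearMap.ker (mulMap k A)),
      iso (Submodule.Quotient.mk x) = Submodule.Quotient.mk y →
      iso (Submodule.Quotient.mk (actL k A c x)) =
        Submodule.Quotient.mk (actL k A c y)) :
    N₁ = N₂ := by
  have hcomm : iso.toLinearMap ∘ₗ (N₁.comap (LinearMap.ker (mulMap k A)).subtype).mkQ =
      (N₂.comap (LinearMap.ker (mulMap k A)).subtype).mkQ := by
    refine (LinearMap.cancel_right (projKer_surjective k A)).mp (TensorProduct.ext' fun a b => ?_)
    simpa [projKer_tmul] using hisoL a _ _ (hisoD b)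
  exact Submodule.eq_of_comap_subtype_eq hN₁ker hN₂ker
    (Submodule.eq_of_linearEquiv_comp_mkQ iso hcomm)
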